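/- Let a > 0, r > 0 and let g : ℝ → ℂ be a Schwartz function. Define (F_r g)(x) = √(a r/π) ∫_ℝ g(t)·e^{i a r x t} dt. Then for every z ∈ ℂ, [B_{a/2}(F_r g)](z) = 2·√( r/(r²+1) ) · e^{−(a/4)·z²·(r²−1)/(r²+1)} · ∫_ℂ (B_{a/2}g)(w) · e^{(a/4)·conj(w)²·(1−r²)/(r²+1)} · e^{i a r z conj(w)/(r²+1)} dλ_{a/2}(w), and the integral over ℂ converges. -/

import Mathlib

open Complex Real SchwartzMap MeasureTheory

/-- The (parametrized) Bargmann transform `B_{a/2}`: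
`(B_{a/2}f)(z) = (a/π)^{1/4} ∫_ℝ f(x) e^{axz − (a/2)x² − (a/4)z²} dx`. -/
noncomputable def bargmann (a : ℝ) (f : ℝ → ℂ) (z : ℂ) : ℂ :=
  ((a / Real.pi) ^ ((1 : ℝ) / 4) : ℝ) *
    ∫ x : ℝ, f x * Complex.exp (a * x * z - (a / 2) * x ^ 2 - (a / 4) * z ^ 2)

/-- The generalized Fourier transform `(F_r g)(x) = √(ar/π) ∫ g(t) e^{iarxt} dt`. -/
noncomputable def fourierR (a r : ℝ) (g : ℝ → ℂ) (x : ℝ) : ℂ :=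
  (Real.sqrt (a * r / Real.pi) : ℂ) *
    ∫ t : ℝ, g t * Complex.exp (Complex.I * a * r * x * t)

/-- The density of the Gaussian measure `dλ_{a/2}` on `ℂ` with respect to Lebesgue
measure on `ℂ ≅ ℝ²`. -/
noncomputable def gaussianDensity (a : ℝ) (w : ℂ) : ℝ :=
  (a / (2 * Real.pi)) * Real.exp (-(a / 2) * ‖w‖ ^ 2)

/-! Both sides reduce to integrals of `g` against Gaussians. On the left, Fubini and the Gaussian
integral in `x` give `B(F_r g)(z) = (a/π)^{1/4} √(2r) ∫ g(t) e^{a z²/4 + i a r t z - a r² t²/2} dt`.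
On the right, inserting the definition of `B g` and integrating over `w` first leaves, for each
`t`, a Gaussian integral over `ℂ ≅ ℝ²` of the Bargmann kernel against
`e^{(a/4) s w̄² + β w̄} dλ_{a/2}(w)` with `s = (1 - r²)/(r² + 1)` and `β = i a r z/(r² + 1)`;
it converges, uniformly in `t`, because `-1 < s < 1`. Comparing the two integrals over `t` is
then algebra. -/

open scoped ComplexConjugate

lemma integrable_exp_neg_mul_sq_add_mul {b : ℝ} (hb : 0 < b) (c : ℝ) :
    Integrable fun x : ℝ => rexp (-b * x ^ 2 + c * x) := by
  refine (integrable_cexp_quadratic (b := b) (by simpa using hb) c 0).norm.congr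
    (.of_forall fun x => ?_)
  simp only [Complex.norm_exp, add_zero]
  congr 1
  simp [← ofReal_pow]

lemma integral_cexp_neg_mul_sq_add {b : ℝ} (hb : 0 < b) (c d : ℂ) :
    ∫ x : ℝ, cexp (-b * x ^ 2 + c * x + d) = √(π / b) * cexp (c ^ 2 / (4 * b) + d) := by
  have hsqrt : ((π : ℂ) / b) ^ (1 / 2 : ℂ) = √(π / b) := by
    rw [Real.sqrt_eq_rpow, ofReal_cpow (by positivity)]
    push_cast
    rfl
  rw [integral_cexp_quadratic (by simpa using hb), neg_neg, hsqrt]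
  congr 2
  ring

lemma integrable_exp_re_mul_exp_im {b₁ b₂ : ℝ} (hb₁ : 0 < b₁) (hb₂ : 0 < b₂) (c₁ c₂ : ℝ) :
    Integrable fun w : ℂ =>
      rexp (-b₁ * w.re ^ 2 + c₁ * w.re) * rexp (-b₂ * w.im ^ 2 + c₂ * w.im) :=
  (volume_preserving_equiv_real_prod.integrable_comp_emb
    measurableEquivRealProd.measurableEmbedding).2
    ((integrable_exp_neg_mul_sq_add_mul hb₁ c₁).mul_prod (integrable_exp_neg_mul_sq_add_mul hb₂ c₂))

lemma integral_complex_eq_integral_integral {E : Type*} [NormedAddCommGroup E] [NormedSpace ℝ E]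
    {f : ℂ → E} (hf : Integrable f) :
    ∫ w, f w = ∫ x : ℝ, ∫ y : ℝ, f ⟨x, y⟩ := by
  have e := volume_preserving_equiv_real_prod.symm
  rw [← e.integral_comp measurableEquivRealProd.symm.measurableEmbedding]
  exact integral_prod (fun p : ℝ × ℝ => f ⟨p.1, p.2⟩)
    ((e.integrable_comp_emb measurableEquivRealProd.symm.measurableEmbedding).2 hf)

noncomputable def bargmannKernel (a t : ℝ) (w : ℂ) : ℂ :=
  cexp (a * t * w - a / 2 * t ^ 2 - a / 4 * w ^ 2)

lemma bargmann_eq_integral_bargmannKernel (a : ℝ) (f : ℝ → ℂ) (w : ℂ) :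
    bargmann a f w = ((a / π) ^ ((1 : ℝ) / 4) : ℝ) * ∫ t, f t * bargmannKernel a t w :=
  rfl

noncomputable def weightedBargmannKernel (a s : ℝ) (β : ℂ) (t : ℝ) (w : ℂ) : ℂ :=
  bargmannKernel a t w * cexp (a / 4 * conj w ^ 2 * s) * cexp (β * conj w) *
    gaussianDensity a w

section WeightedKernel

variable {a s : ℝ} (β : ℂ)

lemma continuous_weightedBargmannKernel :
    Continuous fun q : ℂ × ℝ => weightedBargmannKernel a s β q.2 q.1 := by
  unfold weightedBargmannKernel bargmannKernel gaussianDensity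
  fun_prop

lemma norm_weightedBargmannKernel (ha : 0 < a) (t : ℝ) (w : ℂ) :
    ‖weightedBargmannKernel a s β t w‖ = a / (2 * π) *
      rexp (a * t * w.re - a / 2 * t ^ 2 - a / 4 * (1 - s) * (w.re ^ 2 - w.im ^ 2) +
        β.re * w.re + β.im * w.im - a / 2 * (w.re ^ 2 + w.im ^ 2)) := by
  have hdens : ‖(gaussianDensity a w : ℂ)‖ =
      a / (2 * π) * rexp (-(a / 2) * (w.re ^ 2 + w.im ^ 2)) := by
    rw [norm_real, Real.norm_of_nonneg (by unfold gaussianDensity; positivity), gaussianDensity,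
      ← Complex.normSq_add_mul_I, ← Complex.sq_norm, re_add_im]
  simp only [weightedBargmannKernel, bargmannKernel, norm_mul, Complex.norm_exp, hdens]
  rw [mul_comm, mul_assoc, ← Real.exp_add, ← Real.exp_add, ← Real.exp_add]
  congr 2
  simp [pow_two]
  ring

-- `a t x - (a/2) t² ≤ (a/2) x²` removes the dependence on `t`.
lemma norm_weightedBargmannKernel_le (ha : 0 < a) (t : ℝ) (w : ℂ) :
    ‖weightedBargmannKernel a s β t w‖ ≤ a / (2 * π) *
      (rexp (-(a / 4 * (1 - s)) * w.re ^ 2 + β.re * w.re) *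
        rexp (-(a / 4 * (1 + s)) * w.im ^ 2 + β.im * w.im)) := by
  rw [norm_weightedBargmannKernel β ha, ← Real.exp_add]
  gcongr
  nlinarith [mul_nonneg ha.le (sq_nonneg (t - w.re))]

lemma weightedBargmannKernel_mk (t x y : ℝ) :
    weightedBargmannKernel a s β t ⟨x, y⟩ = a / (2 * π) *
      cexp (-((a / 4 * (1 + s) : ℝ) : ℂ) * y ^ 2 + I * (a * t - a / 2 * (1 + s) * x - β) * y +
        (a * t * x - a / 2 * t ^ 2 - a / 4 * (3 - s) * x ^ 2 + β * x)) := by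
  have hnorm : ‖(⟨x, y⟩ : ℂ)‖ ^ 2 = x ^ 2 + y ^ 2 := by
    rw [Complex.sq_norm, Complex.normSq_mk]
    ring
  rw [weightedBargmannKernel, bargmannKernel, gaussianDensity, hnorm, mk_eq_add_mul_I]
  push_cast
  simp only [map_add, map_mul, conj_ofReal, conj_I, mul_assoc, ← Complex.exp_add]
  rw [mul_left_comm, ← Complex.exp_add]
  congr 2
  linear_combination (a / 4 * (s - 1) * y ^ 2) * I_sq

variable (ha : 0 < a) (hs : -1 < s) (hs' : s < 1)
include ha hs hs'

lemma integrable_weightedBargmannKernel_bound :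
    Integrable fun w : ℂ => a / (2 * π) *
      (rexp (-(a / 4 * (1 - s)) * w.re ^ 2 + β.re * w.re) *
        rexp (-(a / 4 * (1 + s)) * w.im ^ 2 + β.im * w.im)) :=
  (integrable_exp_re_mul_exp_im (by nlinarith) (by nlinarith) β.re β.im).const_mul _

lemma integrable_weightedBargmannKernel (t : ℝ) :
    Integrable (weightedBargmannKernel a s β t) :=
  (integrable_weightedBargmannKernel_bound β ha hs hs').mono'
    ((continuous_weightedBargmannKernel β).comp
      (continuous_id.prodMk continuous_const)).aestronglyMeasurable
    (.of_forall (norm_weightedBargmannKernel_le β ha t))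

lemma integrable_mul_weightedBargmannKernel {g : ℝ → ℂ} (hg : Integrable g) :
    Integrable (fun q : ℂ × ℝ => g q.2 * weightedBargmannKernel a s β q.2 q.1)
      ((volume : Measure ℂ).prod volume) := by
  refine ((integrable_weightedBargmannKernel_bound β ha hs hs').mul_prod hg.norm).mono'
    (hg.aestronglyMeasurable.comp_snd.mul
      (continuous_weightedBargmannKernel β).aestronglyMeasurable) (.of_forall fun q => ?_)
  rw [norm_mul, mul_comm]
  exact mul_le_mul_of_nonneg_right (norm_weightedBargmannKernel_le β ha _ _) (norm_nonneg _)

lemma integral_weightedBargmannKernel (t : ℝ) :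
    ∫ w, weightedBargmannKernel a s β t w =
      ((√(1 + s))⁻¹ : ℝ) * cexp (a / 2 * t ^ 2 - (a * t - β) ^ 2 / (a * (1 + s))) := by
  have hs₀ : 0 < 1 + s := by linarith
  have hb : 0 < a / 4 * (1 + s) := by positivity
  have ha' : (a : ℂ) ≠ 0 := by exact_mod_cast ha.ne'
  have hs₀' : 1 + (s : ℂ) ≠ 0 := by exact_mod_cast hs₀.ne'
  have hinner (x : ℝ) : ∫ y : ℝ,
      cexp (-((a / 4 * (1 + s) : ℝ) : ℂ) * y ^ 2 + I * (a * t - a / 2 * (1 + s) * x - β) * y +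
        (a * t * x - a / 2 * t ^ 2 - a / 4 * (3 - s) * x ^ 2 + β * x)) =
      √(π / (a / 4 * (1 + s))) *
        cexp (-a * x ^ 2 + 2 * a * t * x +
          (-(a / 2) * t ^ 2 - (a * t - β) ^ 2 / (a * (1 + s)))) := by
    rw [integral_cexp_neg_mul_sq_add hb]
    congr 2
    push_cast
    rw [mul_pow, I_sq]
    field_simp
    ring
  have hconst : a / (2 * π) * (√(π / (a / 4 * (1 + s))) * √(π / a)) = (√(1 + s))⁻¹ := by
    rw [← Real.sqrt_mul (by positivity),
      show π / (a / 4 * (1 + s)) * (π / a) = (2 * π / a) ^ 2 / (1 + s) by field_simp; ring,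
      Real.sqrt_div' _ hs₀.le, Real.sqrt_sq (by positivity)]
    field_simp
  rw [integral_complex_eq_integral_integral (integrable_weightedBargmannKernel β ha hs hs' t)]
  simp_rw [weightedBargmannKernel_mk, integral_const_mul, hinner, integral_const_mul]
  rw [integral_cexp_neg_mul_sq_add ha, ← hconst]
  push_cast
  simp only [mul_assoc]
  congr 4
  field_simp
  ring

end WeightedKernel

lemma bargmann_mul_weight_eq_integral (a s : ℝ) (β : ℂ) (g : ℝ → ℂ) (w : ℂ) :
    bargmann a g w * cexp (a / 4 * conj w ^ 2 * s) * cexp (β * conj w) * gaussianDensity a w =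
      ((a / π) ^ ((1 : ℝ) / 4) : ℝ) * ∫ t, g t * weightedBargmannKernel a s β t w := by
  simp only [bargmann_eq_integral_bargmannKernel, weightedBargmannKernel, ← mul_assoc,
    integral_mul_const]

lemma integral_bargmann_mul_weight {a s : ℝ} (ha : 0 < a) (hs : -1 < s) (hs' : s < 1) (β : ℂ)
    {g : ℝ → ℂ} (hg : Integrable g) :
    Integrable (fun w => bargmann a g w * cexp (a / 4 * conj w ^ 2 * s) * cexp (β * conj w) *
      gaussianDensity a w) ∧
    ∫ w, bargmann a g w * cexp (a / 4 * conj w ^ 2 * s) * cexp (β * conj w) *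
      gaussianDensity a w = ((a / π) ^ ((1 : ℝ) / 4) / √(1 + s) : ℝ) *
        ∫ t, g t * cexp (a / 2 * t ^ 2 - (a * t - β) ^ 2 / (a * (1 + s))) := by
  have hprod := integrable_mul_weightedBargmannKernel β ha hs hs' hg
  simp only [bargmann_mul_weight_eq_integral]
  refine ⟨hprod.integral_prod_left.const_mul _, ?_⟩
  rw [integral_const_mul, integral_integral_swap hprod]
  simp_rw [integral_const_mul, integral_weightedBargmannKernel β ha hs hs', mul_left_comm (g _),
    integral_const_mul]
  push_cast
  ring

lemma integrable_mul_cexp_gaussian_fourier {a : ℝ} (ha : 0 < a) (r : ℝ) {g : ℝ → ℂ}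
    (hg : Integrable g) (z : ℂ) :
    Integrable (fun q : ℝ × ℝ => g q.2 *
      cexp (-((a / 2 : ℝ) : ℂ) * q.1 ^ 2 + (a * z + I * a * r * q.2) * q.1 + -(a / 4 * z ^ 2)))
      ((volume : Measure ℝ).prod volume) := by
  refine (((integrable_exp_neg_mul_sq_add_mul (by positivity : 0 < a / 2) (a * z.re)).mul_const
    (rexp (-(a / 4 * z ^ 2).re))).mul_prod hg.norm).mono'
    (hg.aestronglyMeasurable.comp_snd.mul (by fun_prop : Continuous _).aestronglyMeasurable)
    (.of_forall fun q => le_of_eq ?_)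
  rw [norm_mul, Complex.norm_exp, mul_comm, ← Real.exp_add]
  congr 2
  simp [pow_two]

lemma bargmann_fourierR_eq_integral {a : ℝ} (ha : 0 < a) (r : ℝ) {g : ℝ → ℂ}
    (hg : Integrable g) (z : ℂ) :
    bargmann a (fourierR a r g) z = ((a / π) ^ ((1 : ℝ) / 4) * √(2 * r) : ℝ) *
      ∫ t, g t * cexp (a / 4 * z ^ 2 + I * a * r * t * z - a / 2 * r ^ 2 * t ^ 2) := by
  have ha' : (a : ℂ) ≠ 0 := by exact_mod_cast ha.ne'
  have hexp (x t : ℝ) : cexp (I * a * r * x * t) * bargmannKernel a x z =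
      cexp (-((a / 2 : ℝ) : ℂ) * x ^ 2 + (a * z + I * a * r * t) * x + -(a / 4 * z ^ 2)) := by
    rw [bargmannKernel, ← Complex.exp_add]
    push_cast
    ring_nf
  have hfubini (x : ℝ) : fourierR a r g x * bargmannKernel a x z = √(a * r / π) *
      ∫ t, g t *
        cexp (-((a / 2 : ℝ) : ℂ) * x ^ 2 + (a * z + I * a * r * t) * x + -(a / 4 * z ^ 2)) := by
    rw [fourierR, mul_assoc, ← integral_mul_const]
    simp only [mul_assoc (g _), hexp]
  have hgauss (t : ℝ) : ∫ x : ℝ,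
      cexp (-((a / 2 : ℝ) : ℂ) * x ^ 2 + (a * z + I * a * r * t) * x + -(a / 4 * z ^ 2)) =
      √(π / (a / 2)) * cexp (a / 4 * z ^ 2 + I * a * r * t * z - a / 2 * r ^ 2 * t ^ 2) := by
    rw [integral_cexp_neg_mul_sq_add (by positivity)]
    congr 2
    push_cast
    simp only [add_sq, mul_pow, I_sq]
    field_simp
    ring
  have hconst : √(a * r / π) * √(π / (a / 2)) = √(2 * r) := by
    rw [← Real.sqrt_mul' _ (by positivity)]
    congr 1
    field_simp
  rw [bargmann_eq_integral_bargmannKernel]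
  simp_rw [hfubini]
  rw [integral_const_mul, integral_integral_swap (integrable_mul_cexp_gaussian_fourier ha r hg z)]
  simp_rw [integral_const_mul, hgauss, mul_left_comm (g _), integral_const_mul, ← hconst]
  push_cast
  ring

lemma two_mul_sqrt_div_sqrt_one_add (r : ℝ) :
    2 * √(r / (r ^ 2 + 1)) / √(1 + (1 - r ^ 2) / (r ^ 2 + 1)) = √(2 * r) := by
  rw [show 1 + (1 - r ^ 2) / (r ^ 2 + 1) = 2 / (r ^ 2 + 1) by field_simp; ring,
    mul_div_assoc, ← Real.sqrt_div' _ (by positivity),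
    show r / (r ^ 2 + 1) / (2 / (r ^ 2 + 1)) = r / 2 by field_simp,
    show 2 * r = 2 ^ 2 * (r / 2) by ring, Real.sqrt_mul (by positivity), Real.sqrt_sq zero_le_two]

lemma cexp_fourier_exponent_eq {a : ℝ} (ha : a ≠ 0) (r t : ℝ) (z : ℂ) :
    cexp (a / 4 * z ^ 2 + I * a * r * t * z - a / 2 * r ^ 2 * t ^ 2) =
      cexp (-(a / 4) * z ^ 2 * ((r ^ 2 - 1) / (r ^ 2 + 1))) *
        cexp (a / 2 * t ^ 2 - (a * t - I * a * r * z / (r ^ 2 + 1)) ^ 2 /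
          (a * (1 + (1 - r ^ 2) / (r ^ 2 + 1)))) := by
  have ha' : (a : ℂ) ≠ 0 := by exact_mod_cast ha
  have hk : (r : ℂ) ^ 2 + 1 ≠ 0 := by exact_mod_cast (by positivity : 0 < r ^ 2 + 1).ne'
  rw [← Complex.exp_add]
  congr 1
  field_simp
  ring_nf
  simp only [I_sq]
  ring

/-- For a Schwartz function `g` and `r > 0`, the Bargmann transform of `F_r g` is
given by an integral over `ℂ` against the Gaussian measure `dλ_{a/2}`, and that
integral converges. -/
theorem bargmann_fourierR (a r : ℝ) (ha : 0 < a) (hr : 0 < r)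
    (g : SchwartzMap ℝ ℂ) (z : ℂ) :
    MeasureTheory.Integrable
      (fun w : ℂ => bargmann a (fun x : ℝ => g x) w *
        Complex.exp ((a / 4) * (starRingEnd ℂ) w ^ 2 * ((1 - r ^ 2) / (r ^ 2 + 1))) *
        Complex.exp (Complex.I * a * r * z * (starRingEnd ℂ) w / (r ^ 2 + 1)) *
        (gaussianDensity a w : ℂ)) (volume : Measure ℂ) ∧
    bargmann a (fourierR a r (fun x : ℝ => g x)) z =
      2 * (Real.sqrt (r / (r ^ 2 + 1)) : ℂ) *
        Complex.exp (-(a / 4) * z ^ 2 * ((r ^ 2 - 1) / (r ^ 2 + 1))) *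
        ∫ w : ℂ, bargmann a (fun x : ℝ => g x) w *
          Complex.exp ((a / 4) * (starRingEnd ℂ) w ^ 2 * ((1 - r ^ 2) / (r ^ 2 + 1))) *
          Complex.exp (Complex.I * a * r * z * (starRingEnd ℂ) w / (r ^ 2 + 1)) *
          (gaussianDensity a w : ℂ) := by
  have hk : 0 < r ^ 2 + 1 := by positivity
  have hs : -1 < (1 - r ^ 2) / (r ^ 2 + 1) := by rw [lt_div_iff₀ hk]; linarith
  have hs' : (1 - r ^ 2) / (r ^ 2 + 1) < 1 := by rw [div_lt_one hk]; nlinarith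
  obtain ⟨hint, heq⟩ := integral_bargmann_mul_weight ha hs hs' (I * a * r * z / (r ^ 2 + 1))
    g.integrable
  have hsC : (((1 - r ^ 2) / (r ^ 2 + 1) : ℝ) : ℂ) = (1 - r ^ 2) / (r ^ 2 + 1) := by push_cast; rfl
  rw [hsC] at hint heq
  simp only [div_mul_eq_mul_div (I * a * r * z)] at hint heq
  refine ⟨hint, ?_⟩
  rw [heq, bargmann_fourierR_eq_integral ha r g.integrable, ← two_mul_sqrt_div_sqrt_one_add]
  simp_rw [cexp_fourier_exponent_eq ha.ne', mul_left_comm (g _), integral_const_mul]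
  push_cast
  ring
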